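/- arXiv:1201.2531 — 5 statements merged into one kernel-verified Lean document; each statement's English description precedes it below -/
import Mathlib

section
/- Let ε > 0, let Δ > 0, and let a, b ∈ ℝ^r (r a finite index type) with ‖a − b‖₁ ≤ Δ. Set λ = Δ/ε and let μ_a (resp. μ_b) be the probability measure on ℝ^r whose density with respect to Lebesgue measure is x ↦ ∏_{i} (1/(2λ)) exp(−|x_i − a_i|/λ) (i.e., a is perturbed coordinatewise by independent Laplace(λ) noise). Then for every measurable set S ⊆ ℝ^r, μ_a(S) ≤ e^{ε} · μ_b(S). -/
open MeasureTheory Real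

/-- The Laplacian Perturbation Algorithm guarantees ε-differential privacy:
if `‖a - b‖₁ ≤ Δ` and each coordinate is perturbed by independent Laplace noise of
scale `λ = Δ/ε`, then the resulting output distributions are `e^ε`-close. -/
theorem lpa_differential_privacy {ι : Type*} [Fintype ι] (ε Δ : ℝ) (hε : 0 < ε) (hΔ : 0 < Δ)
    (a b : ι → ℝ) (hab : ∑ i, |a i - b i| ≤ Δ)
    (S : Set (ι → ℝ)) (hS : MeasurableSet S) :
    (volume.withDensity fun x : ι → ℝ =>
        ENNReal.ofReal (∏ i, 1 / (2 * (Δ / ε)) * Real.exp (-|x i - a i| / (Δ / ε)))) S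
      ≤ ENNReal.ofReal (Real.exp ε) *
        (volume.withDensity fun x : ι → ℝ =>
          ENNReal.ofReal (∏ i, 1 / (2 * (Δ / ε)) * Real.exp (-|x i - b i| / (Δ / ε)))) S := by
  have hlam : 0 < Δ / ε := div_pos hΔ hε
  have key : ∀ x : ι → ℝ,
      ENNReal.ofReal (∏ i, 1 / (2 * (Δ / ε)) * Real.exp (-|x i - a i| / (Δ / ε)))
        ≤ ENNReal.ofReal (Real.exp ε) *
          ENNReal.ofReal (∏ i, 1 / (2 * (Δ / ε)) * Real.exp (-|x i - b i| / (Δ / ε))) := by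
    intro x
    rw [← ENNReal.ofReal_mul (Real.exp_pos _).le]
    apply ENNReal.ofReal_le_ofReal
    have expand : ∀ c : ι → ℝ,
        (∏ i, 1 / (2 * (Δ / ε)) * Real.exp (-|x i - c i| / (Δ / ε)))
          = (1 / (2 * (Δ / ε))) ^ Fintype.card ι *
            Real.exp (∑ i, -|x i - c i| / (Δ / ε)) := by
      intro c
      rw [Finset.prod_mul_distrib, Finset.prod_const, Real.exp_sum, Finset.card_univ]
    rw [expand a, expand b, mul_comm (Real.exp ε), mul_assoc, ← Real.exp_add]
    apply mul_le_mul_of_nonneg_left _ (by positivity)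
    apply Real.exp_le_exp.2
    have hsum : ∑ i, (-|x i - a i| / (Δ / ε)) - ∑ i, (-|x i - b i| / (Δ / ε)) ≤ ε := by
      rw [← Finset.sum_sub_distrib]
      have step : ∀ i : ι, -|x i - a i| / (Δ / ε) - -|x i - b i| / (Δ / ε)
          ≤ |a i - b i| / (Δ / ε) := by
        intro i
        rw [div_sub_div_same]
        gcongr
        have := abs_sub_abs_le_abs_sub (x i - b i) (x i - a i)
        have h2 : x i - b i - (x i - a i) = a i - b i := by ring
        rw [h2] at this
        linarith
      calc ∑ i, (-|x i - a i| / (Δ / ε) - -|x i - b i| / (Δ / ε))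
          ≤ ∑ i, |a i - b i| / (Δ / ε) := Finset.sum_le_sum fun i _ => step i
        _ = (∑ i, |a i - b i|) / (Δ / ε) := by rw [Finset.sum_div]
        _ ≤ Δ / (Δ / ε) := by gcongr
        _ = ε := by field_simp
    linarith
  rw [withDensity_apply _ hS, withDensity_apply _ hS,
    ← lintegral_const_mul' _ _ ENNReal.ofReal_ne_top]
  exact lintegral_mono fun x => key x
end

section
/- Fix an integer n ≥ 1 and λ > 0. Let P be the probability measure on (ℝ_{≥0})^n × (ℝ_{≥0})^n given by the product of 2n independent copies of the gamma distribution with shape 1/n and scale λ. Then the pushforward of P under the map (x, y) ↦ ∑_{i=1}^n (x_i − y_i) equals the Laplace distribution with scale λ, i.e., the measure on ℝ with density x ↦ (1/(2λ)) e^{−|x|/λ} with respect to Lebesgue measure. -/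
/-!
Gamma laws with a common rate `r` form a convolution semigroup in the shape parameter: for
`x > 0` the convolution of the densities of `Γ(a, r)` and `Γ(b, r)` is
`r^(a+b) e^(-r x) / (Γ(a) Γ(b))` times the beta integral `∫₀ˣ t^(a-1) (x-t)^(b-1) dt`,
which is `x^(a+b-1) B(a, b)`. Hence each block of `n` coordinates sums to an exponential variable
of rate `1/λ` (the characteristic functions multiply). The difference of two independent
exponentials of rate `r` has density `(r/2) e^(-r|x|)`: for `x ≤ 0` the integrand of the
convolution is `(r/2) e^(r x)` times the exponential density of rate `2r`, and the case `x ≥ 0`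
follows by translation.
-/

open MeasureTheory ProbabilityTheory Real Set
open scoped ENNReal

lemma setLIntegral_Ioo_rpow_mul_sub_rpow {a b x : ℝ} (ha : 0 < a) (hb : 0 < b) (hx : 0 < x) :
    ∫⁻ t in Ioo 0 x, ENNReal.ofReal (t ^ (a - 1) * (x - t) ^ (b - 1))
      = ENNReal.ofReal (x ^ (a + b - 1) * beta a b) := by
  have hbeta := beta_pos ha hb
  -- substituting `t = x u` compares the integral with the total mass of the beta density
  have hsubst := lintegral_image_eq_lintegral_abs_deriv_mul measurableSet_Ioo
    (f := (x * ·)) (f' := fun _ => x)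
    (fun u _ => by simpa using ((hasDerivAt_id u).const_mul x).hasDerivWithinAt)
    (mul_right_injective₀ hx.ne').injOn
    (fun t => ENNReal.ofReal (t ^ (a - 1) * (x - t) ^ (b - 1))) (s := Ioo 0 1)
  rw [image_mul_left_Ioo hx, mul_zero, mul_one] at hsubst
  rw [hsubst, ← mul_one (ENNReal.ofReal (x ^ (a + b - 1) * beta a b)),
    ← lintegral_betaPDF_eq_one ha hb, lintegral_betaPDF,
    ← lintegral_const_mul' _ _ ENNReal.ofReal_ne_top]
  refine setLIntegral_congr_fun measurableSet_Ioo fun u ⟨hu0, hu1⟩ => ?_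
  rw [← ENNReal.ofReal_mul (by positivity), ← ENNReal.ofReal_mul (by positivity)]
  congr 1
  rw [show x - x * u = x * (1 - u) by ring, mul_rpow hx.le hu0.le, mul_rpow hx.le (by linarith),
    show a + b - 1 = 1 + (a - 1) + (b - 1) by ring, rpow_add hx, rpow_add hx, rpow_one,
    abs_of_pos hx]
  field_simp

lemma gammaPDF_mul_gammaPDF_sub {a b r x t : ℝ} (ha : 0 < a) (hb : 0 < b) (hr : 0 < r)
    (ht : t ∈ Ioo 0 x) :
    gammaPDF a r t * gammaPDF b r (x - t)
      = ENNReal.ofReal (r ^ a / Gamma a * (r ^ b / Gamma b) * exp (-(r * x)))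
        * ENNReal.ofReal (t ^ (a - 1) * (x - t) ^ (b - 1)) := by
  obtain ⟨ht0, htx⟩ := ht
  have hexp : exp (-(r * t)) * exp (-(r * (x - t))) = exp (-(r * x)) := by
    rw [← exp_add]; ring_nf
  rw [gammaPDF_of_nonneg ht0.le, gammaPDF_of_nonneg (by linarith), ← ENNReal.ofReal_mul,
    ← ENNReal.ofReal_mul]
  · congr 1
    linear_combination
      (r ^ a / Gamma a * t ^ (a - 1) * (r ^ b / Gamma b * (x - t) ^ (b - 1))) * hexp
  all_goals positivity

lemma lconvolution_gammaPDF_of_pos {a b r x : ℝ} (ha : 0 < a) (hb : 0 < b) (hr : 0 < r)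
    (hx : 0 < x) : (gammaPDF a r ⋆ₗ gammaPDF b r) x = gammaPDF (a + b) r x := by
  have hsupp : (fun t => gammaPDF a r t * gammaPDF b r (-t + x)).support ⊆ Icc 0 x := by
    refine Function.support_subset_iff'.mpr fun t ht => ?_
    rcases not_and_or.mp ht with h | h
    · simp [gammaPDF_of_neg (not_le.mp h)]
    · simp [gammaPDF_of_neg (by linarith [not_le.mp h] : -t + x < 0)]
  rw [lconvolution_def, ← setLIntegral_eq_of_support_subset hsupp,
    setLIntegral_congr Ioo_ae_eq_Icc.symm,
    setLIntegral_congr_fun measurableSet_Ioo fun t ht => by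
      rw [neg_add_eq_sub, gammaPDF_mul_gammaPDF_sub ha hb hr ht],
    lintegral_const_mul' _ _ ENNReal.ofReal_ne_top, setLIntegral_Ioo_rpow_mul_sub_rpow ha hb hx,
    ← ENNReal.ofReal_mul (by positivity), gammaPDF_of_nonneg hx.le]
  congr 1
  rw [beta, rpow_add hr]
  field_simp

lemma gammaMeasure_conv_gammaMeasure {a b r : ℝ} (ha : 0 < a) (hb : 0 < b) (hr : 0 < r) :
    gammaMeasure a r ∗ gammaMeasure b r = gammaMeasure (a + b) r := by
  have hmeas (c : ℝ) : Measurable (gammaPDF c r) := (measurable_gammaPDFReal c r).ennreal_ofReal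
  rw [gammaMeasure, gammaMeasure, gammaMeasure,
    conv_withDensity_eq_lconvolution (hmeas a) (hmeas b)]
  refine withDensity_congr_ae ?_
  filter_upwards [compl_mem_ae_iff.mpr (volume_singleton (a := (0 : ℝ)))] with x hx
  rcases (show x ≠ 0 from hx).lt_or_gt with hneg | hpos
  · have hzero : ∀ t, gammaPDF a r t * gammaPDF b r (-t + x) = 0 := fun t => by
      rcases lt_or_ge t 0 with ht | ht
      · rw [gammaPDF_of_neg ht, zero_mul]
      · rw [gammaPDF_of_neg (by linarith : -t + x < 0), mul_zero]
    simp [lconvolution_def, hzero, gammaPDF_of_neg hneg]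
  · exact lconvolution_gammaPDF_of_pos ha hb hr hpos

lemma charFun_gammaMeasure_sum {ι : Type*} {s : Finset ι} (hs : s.Nonempty) {a : ι → ℝ}
    (ha : ∀ i, 0 < a i) {r : ℝ} (hr : 0 < r) :
    charFun (gammaMeasure (∑ i ∈ s, a i) r) = ∏ i ∈ s, charFun (gammaMeasure (a i) r) := by
  induction hs using Finset.Nonempty.cons_induction with
  | singleton i => simp
  | cons i s hi hs ih =>
    have hs_pos : 0 < ∑ i ∈ s, a i := Finset.sum_pos (fun i _ => ha i) hs
    have := isProbabilityMeasure_gammaMeasure (ha i) hr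
    have := isProbabilityMeasure_gammaMeasure hs_pos hr
    ext t
    rw [Finset.sum_cons, Finset.prod_cons, ← gammaMeasure_conv_gammaMeasure (ha i) hs_pos hr,
      charFun_conv, ih, Pi.mul_apply]

lemma map_sum_pi_gammaMeasure {ι : Type*} [Fintype ι] [Nonempty ι] {a : ι → ℝ}
    (ha : ∀ i, 0 < a i) {r : ℝ} (hr : 0 < r) :
    (Measure.pi fun i => gammaMeasure (a i) r).map (fun p => ∑ i, p i)
      = gammaMeasure (∑ i, a i) r := by
  have := fun i => isProbabilityMeasure_gammaMeasure (ha i) hr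
  have := isProbabilityMeasure_gammaMeasure
    (Finset.sum_pos (fun i _ => ha i) Finset.univ_nonempty) hr
  refine Measure.ext_of_charFun ?_
  rw [charFun_map_sum_pi_eq_prod, charFun_gammaMeasure_sum Finset.univ_nonempty ha hr]

lemma map_neg_withDensity {G : Type*} [AddGroup G] [MeasurableSpace G] [MeasurableNeg G]
    (μ : Measure G) [μ.IsNegInvariant] (f : G → ℝ≥0∞) :
    (μ.withDensity f).map Neg.neg = μ.withDensity (fun x => f (-x)) := by
  ext s hs
  rw [Measure.map_apply measurable_neg hs, withDensity_apply _ (measurable_neg hs),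
    withDensity_apply _ hs]
  simpa using ((Measure.measurePreserving_neg μ).setLIntegral_comp_preimage_emb
    measurableEmbedding_neg (fun x => f (-x)) s)

lemma map_sub_prod_eq_conv_map_neg {G : Type*} [AddGroup G] [MeasurableSpace G]
    [MeasurableAdd₂ G] [MeasurableNeg G] (μ ν : Measure G) [SFinite μ] [SFinite ν] :
    (μ.prod ν).map (fun p => p.1 - p.2) = μ ∗ ν.map Neg.neg := by
  rw [Measure.conv, ← Measure.map_id (μ := μ),
    Measure.map_prod_map _ _ measurable_id measurable_neg,
    Measure.map_map (by fun_prop) (by fun_prop), Measure.map_id]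
  simp [Function.comp_def, sub_eq_add_neg]

lemma lintegral_exponentialPDF_mul_exponentialPDF_sub_of_nonpos {r x : ℝ} (hr : 0 < r)
    (hx : x ≤ 0) :
    ∫⁻ y, exponentialPDF r y * exponentialPDF r (y - x)
      = ENNReal.ofReal (r / 2 * exp (r * x)) := by
  have hprod (y : ℝ) : exponentialPDF r y * exponentialPDF r (y - x)
      = ENNReal.ofReal (r / 2 * exp (r * x)) * exponentialPDF (2 * r) y := by
    rcases lt_or_ge y 0 with hy | hy
    · simp [exponentialPDF_of_neg hy]
    · rw [exponentialPDF_of_nonneg hy, exponentialPDF_of_nonneg (by linarith),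
        exponentialPDF_of_nonneg hy, ← ENNReal.ofReal_mul (by positivity),
        ← ENNReal.ofReal_mul (by positivity)]
      congr 1
      have hexp : exp (-(r * y)) * exp (-(r * (y - x))) = exp (r * x) * exp (-(2 * r * y)) := by
        rw [← exp_add, ← exp_add]; ring_nf
      linear_combination r * r * hexp
  simp_rw [hprod]
  rw [lintegral_const_mul' _ _ ENNReal.ofReal_ne_top,
    lintegral_exponentialPDF_eq_one (by positivity), mul_one]

lemma lintegral_exponentialPDF_mul_exponentialPDF_sub {r : ℝ} (hr : 0 < r) (x : ℝ) :
    ∫⁻ y, exponentialPDF r y * exponentialPDF r (y - x)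
      = ENNReal.ofReal (r / 2 * exp (-(r * |x|))) := by
  rcases le_total x 0 with hx | hx
  · rw [lintegral_exponentialPDF_mul_exponentialPDF_sub_of_nonpos hr hx, abs_of_nonpos hx]
    ring_nf
  · rw [← lintegral_add_right_eq_self _ x]
    have hshift (y : ℝ) : exponentialPDF r (y + x) * exponentialPDF r (y + x - x)
        = exponentialPDF r y * exponentialPDF r (y - -x) := by
      rw [add_sub_cancel_right, sub_neg_eq_add, mul_comm]
    simp_rw [hshift]
    rw [lintegral_exponentialPDF_mul_exponentialPDF_sub_of_nonpos hr (by linarith),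
      abs_of_nonneg hx]
    ring_nf

lemma map_sub_prod_expMeasure {r : ℝ} (hr : 0 < r) :
    ((expMeasure r).prod (expMeasure r)).map (fun p => p.1 - p.2)
      = volume.withDensity (fun x => ENNReal.ofReal (r / 2 * exp (-(r * |x|)))) := by
  have := isProbabilityMeasure_expMeasure hr
  have hmeas : Measurable (exponentialPDF r) := (measurable_exponentialPDFReal r).ennreal_ofReal
  rw [map_sub_prod_eq_conv_map_neg,
    show expMeasure r = volume.withDensity (exponentialPDF r) from rfl, map_neg_withDensity,
    conv_withDensity_eq_lconvolution (g := fun x => exponentialPDF r (-x)) hmeas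
      (hmeas.comp measurable_neg)]
  congr 1 with x
  rw [lconvolution_def, ← lintegral_exponentialPDF_mul_exponentialPDF_sub hr]
  simp [neg_add_eq_sub]

/-- Divisibility of the Laplace distribution: the sum `∑ i (G₁ᵢ - G₂ᵢ)` of differences of
`2n` i.i.d. gamma random variables with shape `1/n` and scale `λ` (i.e. rate `1/λ`)
has the Laplace distribution with scale `λ`. -/
theorem laplace_divisibility (n : ℕ) (hn : 1 ≤ n) (lam : ℝ) (hlam : 0 < lam) :
    Measure.map (fun p : (Fin n → ℝ) × (Fin n → ℝ) => ∑ i, (p.1 i - p.2 i))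
        ((Measure.pi fun _ : Fin n => gammaMeasure (1 / (n : ℝ)) (1 / lam)).prod
          (Measure.pi fun _ : Fin n => gammaMeasure (1 / (n : ℝ)) (1 / lam)))
      = volume.withDensity
          (fun x : ℝ => ENNReal.ofReal (1 / (2 * lam) * Real.exp (-|x| / lam))) := by
  have hr : 0 < 1 / lam := by positivity
  have : Nonempty (Fin n) := ⟨⟨0, hn⟩⟩
  have := isProbabilityMeasure_gammaMeasure (a := 1 / (n : ℝ)) (by positivity) hr
  have hS : Measurable (fun p : Fin n → ℝ => ∑ i, p i) := by fun_prop
  have hsum : (Measure.pi fun _ : Fin n => gammaMeasure (1 / (n : ℝ)) (1 / lam)).map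
      (fun p => ∑ i, p i) = expMeasure (1 / lam) := by
    rw [map_sum_pi_gammaMeasure (fun _ => by positivity) hr, Finset.sum_const, Finset.card_univ,
      Fintype.card_fin, nsmul_eq_mul, mul_one_div_cancel (by positivity)]
    rfl
  have hsplit : (fun p : (Fin n → ℝ) × (Fin n → ℝ) => ∑ i, (p.1 i - p.2 i)) =
      (fun q : ℝ × ℝ => q.1 - q.2) ∘ Prod.map (fun p => ∑ i, p i) (fun p => ∑ i, p i) := by
    ext p
    simp [Finset.sum_sub_distrib]
  rw [hsplit, ← Measure.map_map (by fun_prop) (hS.prodMap hS), ← Measure.map_prod_map _ _ hS hS,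
    hsum, map_sub_prod_expMeasure hr]
  congr with x
  ring_nf
end

section
/- Let a, b, r > 0. The pushforward under addition (x, y) ↦ x + y of the product of the gamma distribution with shape a and rate r and the gamma distribution with shape b and rate r equals the gamma distribution with shape a + b and rate r. -/
open MeasureTheory ProbabilityTheory Real Set

/-! The law of the sum is the convolution of the two measures, whose density is the convolution
of the densities. For `z > 0` that convolution is `r ^ (a + b) e ^ (-r z) / (Γ(a) Γ(b))` times the
Beta integral `∫₀^z y ^ (a - 1) (z - y) ^ (b - 1) dy = Γ(a) Γ(b) / Γ(a + b) · z ^ (a + b - 1)`,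
i.e. the gamma density of shape `a + b`; for `z < 0` both vanish. -/

theorem integral_rpow_mul_sub_rpow {a b z : ℝ} (ha : 0 < a) (hb : 0 < b) (hz : 0 < z) :
    ∫ x in 0..z, x ^ (a - 1) * (z - x) ^ (b - 1)
      = Gamma a * Gamma b / Gamma (a + b) * z ^ (a + b - 1) := by
  have h := Complex.betaIntegral_scaled a b hz
  rw [Complex.betaIntegral_eq_Gamma_mul_div _ _ (by simpa) (by simpa)] at h
  apply Complex.ofReal_injective
  rw [← intervalIntegral.integral_ofReal]
  calc _ = ∫ x in 0..z, (x : ℂ) ^ ((a : ℂ) - 1) * ((z : ℂ) - x) ^ ((b : ℂ) - 1) := by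
        refine intervalIntegral.integral_congr fun x hx => ?_
        rw [uIcc_of_le hz.le] at hx
        push_cast [Complex.ofReal_cpow hx.1, Complex.ofReal_cpow (sub_nonneg.2 hx.2)]
        rfl
    _ = _ := by
        rw [h]
        push_cast [← Complex.Gamma_ofReal, Complex.ofReal_cpow hz.le]
        ring

theorem intervalIntegrable_rpow_mul_sub_rpow {a b z : ℝ} (ha : 0 < a) (hb : 0 < b) (hz : 0 < z) :
    IntervalIntegrable (fun x => x ^ (a - 1) * (z - x) ^ (b - 1)) volume 0 z := by
  refine intervalIntegral.intervalIntegrable_of_integral_ne_zero ?_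
  rw [integral_rpow_mul_sub_rpow ha hb hz]
  have := Gamma_pos_of_pos ha
  have := Gamma_pos_of_pos hb
  have := Gamma_pos_of_pos (add_pos ha hb)
  positivity

theorem gammaPDFReal_mul_gammaPDFReal_sub (a b r z y : ℝ) :
    gammaPDFReal a r y * gammaPDFReal b r (z - y) = (Icc 0 z).indicator
      (fun y => r ^ a / Gamma a * (r ^ b / Gamma b) * exp (-(r * z)) *
        (y ^ (a - 1) * (z - y) ^ (b - 1))) y := by
  by_cases hy : y ∈ Icc 0 z
  · rw [indicator_of_mem hy, gammaPDFReal, gammaPDFReal, if_pos hy.1, if_pos (sub_nonneg.2 hy.2)]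
    have : exp (-(r * y)) * exp (-(r * (z - y))) = exp (-(r * z)) := by
      rw [← exp_add]; ring_nf
    linear_combination
      (r ^ a / Gamma a * (r ^ b / Gamma b) * (y ^ (a - 1) * (z - y) ^ (b - 1))) * this
  · rw [indicator_of_notMem hy, gammaPDFReal, gammaPDFReal]
    rcases not_and_or.1 hy with hy | hy
    · simp [hy]
    · simp [sub_nonneg, hy]

theorem lconvolution_gammaPDF_apply {a b r : ℝ} (ha : 0 < a) (hr : 0 < r) (z : ℝ) :
    (gammaPDF a r ⋆ₗ gammaPDF b r) z = ∫⁻ y in Icc 0 z, ENNReal.ofReal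
      (r ^ a / Gamma a * (r ^ b / Gamma b) * exp (-(r * z)) *
        (y ^ (a - 1) * (z - y) ^ (b - 1))) := by
  rw [lconvolution_def, ← lintegral_indicator measurableSet_Icc]
  refine lintegral_congr fun y => ?_
  rw [gammaPDF, gammaPDF, ← ENNReal.ofReal_mul (gammaPDFReal_nonneg ha hr y), neg_add_eq_sub,
    gammaPDFReal_mul_gammaPDFReal_sub]
  exact (congrFun (indicator_comp_of_zero ENNReal.ofReal_zero) y).symm

/- Only almost everywhere: at `z = 0` the convolution vanishes, but `gammaPDF (a + b) r 0` does not
when `a + b = 1`, since `0 ^ 0 = 1`. -/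
theorem lconvolution_gammaPDF_ae_eq {a b r : ℝ} (ha : 0 < a) (hb : 0 < b) (hr : 0 < r) :
    gammaPDF a r ⋆ₗ gammaPDF b r =ᵐ[volume] gammaPDF (a + b) r := by
  filter_upwards [compl_mem_ae_iff.2 (measure_singleton (0 : ℝ))] with z hz
  rw [lconvolution_gammaPDF_apply ha hr]
  rcases lt_or_gt_of_ne hz with hz | hz
  · rw [Icc_eq_empty hz.not_ge, Measure.restrict_empty, lintegral_zero_measure,
      gammaPDF_of_neg hz]
  have hint := (intervalIntegrable_rpow_mul_sub_rpow ha hb hz).const_mul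
    (r ^ a / Gamma a * (r ^ b / Gamma b) * exp (-(r * z)))
  have hnonneg : ∀ y ∈ Icc 0 z, 0 ≤ r ^ a / Gamma a * (r ^ b / Gamma b) * exp (-(r * z)) *
      (y ^ (a - 1) * (z - y) ^ (b - 1)) := fun y hy => by
    have := rpow_nonneg hy.1 (a - 1)
    have := rpow_nonneg (sub_nonneg.2 hy.2) (b - 1)
    have := Gamma_pos_of_pos ha
    have := Gamma_pos_of_pos hb
    positivity
  rw [← ofReal_integral_eq_lintegral_ofReal
      ((intervalIntegrable_iff_integrableOn_Icc_of_le hz.le).1 hint)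
      ((ae_restrict_iff' measurableSet_Icc).2 (ae_of_all _ hnonneg)),
    integral_Icc_eq_integral_Ioc, ← intervalIntegral.integral_of_le hz.le,
    intervalIntegral.integral_const_mul, integral_rpow_mul_sub_rpow ha hb hz,
    gammaPDF_of_nonneg hz.le, rpow_add hr]
  have := Gamma_pos_of_pos ha
  have := Gamma_pos_of_pos hb
  have := Gamma_pos_of_pos (add_pos ha hb)
  congr 1
  field_simp

theorem measurable_gammaPDF (a r : ℝ) : Measurable (gammaPDF a r) :=
  (measurable_gammaPDFReal a r).ennreal_ofReal

/-- Summation property of the gamma distribution: the sum of two independent gamma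
random variables with shapes `a`, `b` and common rate `r` is gamma with shape `a + b`
and rate `r`. -/
theorem gamma_add_gamma (a b r : ℝ) (ha : 0 < a) (hb : 0 < b) (hr : 0 < r) :
    Measure.map (fun p : ℝ × ℝ => p.1 + p.2) ((gammaMeasure a r).prod (gammaMeasure b r))
      = gammaMeasure (a + b) r := by
  change gammaMeasure a r ∗ gammaMeasure b r = gammaMeasure (a + b) r
  rw [gammaMeasure, gammaMeasure, gammaMeasure, conv_withDensity_eq_lconvolution
    (measurable_gammaPDF a r) (measurable_gammaPDF b r)]
  exact withDensity_congr_ae (lconvolution_gammaPDF_ae_eq ha hb hr)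
end

section
/- Let a > 0 and let γ, ν ∈ ℝ satisfy γ + 1 + ν > 0 and γ + 1 − ν > 0. Define K_ν(x) = (1/2)(x/2)^ν ∫₀^∞ t^{−ν−1} exp(−t − x²/(4t)) dt for x > 0 (the modified Bessel function of the third kind). Then ∫₀^∞ x^γ K_ν(a x) dx = (2^{γ−1} / a^{γ+1}) · Γ((1+γ+ν)/2) · Γ((1+γ−ν)/2). -/
/-!
The substitution `x ↦ a x` reduces to `a = 1`. Writing `x ^ γ K_ν(x)` as an integral over `t`,
the integrand is nonnegative, so the order of integration may be exchanged. For fixed `t` the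
`x`-integral is the Gaussian moment `2 ^ (-ν) ∫ x ^ (γ + ν) exp (-x² / 4t) dx`, which produces
`Γ((1 + γ + ν) / 2)` and the power `t ^ ((γ + ν + 1) / 2)`; the remaining `t`-integral is then
Euler's integral for `Γ((1 + γ - ν) / 2)`.
-/

open MeasureTheory Real

/-- The modified Bessel function of the third kind with index `ν`, defined for `x > 0`
by its integral representation. -/
noncomputable def besselK (ν x : ℝ) : ℝ :=
  1 / 2 * (x / 2) ^ ν * ∫ t in Set.Ioi (0 : ℝ), t ^ (-ν - 1) * Real.exp (-t - x ^ 2 / (4 * t))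

open Set

theorem integral_Ioi_rpow_smul_comp_mul_left {E : Type*} [NormedAddCommGroup E]
    [NormedSpace ℝ E] (f : ℝ → E) (s : ℝ) {a : ℝ} (ha : 0 < a) :
    ∫ x in Ioi 0, x ^ s • f (a * x) = a ^ (-(s + 1)) • ∫ x in Ioi 0, x ^ s • f x := by
  have hscale : ∀ x ∈ Ioi (0 : ℝ), x ^ s • f (a * x) = a ^ (-s) • ((a * x) ^ s • f (a * x)) := by
    intro x hx
    rw [mul_rpow ha.le (le_of_lt hx), smul_smul, ← mul_assoc, ← rpow_add ha, neg_add_cancel,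
      rpow_zero, one_mul]
  rw [setIntegral_congr_fun measurableSet_Ioi hscale, integral_smul,
    integral_comp_mul_left_Ioi (fun y => y ^ s • f y) 0 ha, mul_zero, smul_smul,
    neg_add, rpow_add ha, rpow_neg_one]

theorem integral_rpow_mul_exp_neg_mul_sq {s b : ℝ} (hs : -1 < s) (hb : 0 < b) :
    ∫ x in Ioi 0, x ^ s * exp (-b * x ^ 2) = b ^ (-(s + 1) / 2) / 2 * Gamma ((s + 1) / 2) := by
  simp_rw [← rpow_two]
  rw [integral_rpow_mul_exp_neg_mul_rpow two_pos hs hb, mul_one_div]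

theorem integrable_prod_of_ae_nonneg {α β : Type*} [MeasurableSpace α] [MeasurableSpace β]
    {μ : Measure α} {ν : Measure β} [SFinite ν] {f : α × β → ℝ}
    (hf : AEStronglyMeasurable f (μ.prod ν)) (hf₀ : ∀ᵐ x ∂μ, ∀ᵐ y ∂ν, 0 ≤ f (x, y))
    (hsec : ∀ᵐ x ∂μ, Integrable (fun y => f (x, y)) ν)
    (hint : Integrable (fun x => ∫ y, f (x, y) ∂ν) μ) : Integrable f (μ.prod ν) := by
  refine (integrable_prod_iff hf).2 ⟨hsec, hint.congr ?_⟩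
  filter_upwards [hf₀] with x hx
  exact integral_congr_ae (hx.mono fun y hy => (norm_of_nonneg hy).symm)

noncomputable def besselKIntegrand (ν x t : ℝ) : ℝ :=
  1 / 2 * (x / 2) ^ ν * (t ^ (-ν - 1) * exp (-t - x ^ 2 / (4 * t)))

theorem besselK_eq_integral (ν x : ℝ) : besselK ν x = ∫ t in Ioi 0, besselKIntegrand ν x t :=
  (integral_const_mul _ _).symm

theorem rpow_mul_besselKIntegrand {γ ν x : ℝ} (t : ℝ) (hx : 0 < x) :
    x ^ γ * besselKIntegrand ν x t =
      2 ^ (-ν) / 2 * t ^ (-ν - 1) * exp (-t) * (x ^ (γ + ν) * exp (-(4 * t)⁻¹ * x ^ 2)) := by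
  have hexp : -t - x ^ 2 / (4 * t) = -t + -(4 * t)⁻¹ * x ^ 2 := by ring
  rw [besselKIntegrand, hexp, exp_add, div_rpow hx.le zero_le_two, rpow_add hx,
    rpow_neg zero_le_two]
  ring

theorem inv_four_mul_rpow_neg_half {t : ℝ} (ht : 0 < t) (s : ℝ) :
    (4 * t)⁻¹ ^ (-(s + 1) / 2) = 2 ^ (s + 1) * t ^ ((s + 1) / 2) := by
  rw [inv_rpow (by positivity), ← rpow_neg (by positivity), neg_div, neg_neg,
    mul_rpow zero_le_four ht.le, show (4 : ℝ) = 2 ^ (2 : ℝ) by norm_num, ← rpow_mul zero_le_two]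
  ring_nf

theorem integral_rpow_mul_besselKIntegrand {γ ν t : ℝ} (hγν : -1 < γ + ν) (ht : 0 < t) :
    ∫ x in Ioi 0, x ^ γ * besselKIntegrand ν x t =
      2 ^ (γ - 1) * Gamma ((1 + γ + ν) / 2) * (exp (-t) * t ^ ((1 + γ - ν) / 2 - 1)) := by
  have hpow2 : (2 : ℝ) ^ (-ν) * 2 ^ (γ + ν + 1) = 2 ^ (γ - 1) * 4 := by
    rw [← rpow_add two_pos, show (4 : ℝ) = 2 ^ (2 : ℝ) by norm_num, ← rpow_add two_pos]
    ring_nf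
  have hpowt : t ^ (-ν - 1) * t ^ ((γ + ν + 1) / 2) = t ^ ((1 + γ - ν) / 2 - 1) := by
    rw [← rpow_add ht]
    ring_nf
  rw [setIntegral_congr_fun measurableSet_Ioi fun x hx => rpow_mul_besselKIntegrand t hx,
    integral_const_mul, integral_rpow_mul_exp_neg_mul_sq hγν (by positivity),
    inv_four_mul_rpow_neg_half ht]
  calc _ = 2 ^ (-ν) * 2 ^ (γ + ν + 1) / 4 * (t ^ (-ν - 1) * t ^ ((γ + ν + 1) / 2)) *
        exp (-t) * Gamma ((γ + ν + 1) / 2) := by ring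
    _ = _ := by rw [hpow2, hpowt]; ring_nf

theorem integrable_rpow_mul_besselKIntegrand {γ ν : ℝ} (h1 : 0 < γ + 1 + ν) (h2 : 0 < γ + 1 - ν) :
    Integrable (Function.uncurry fun t x => x ^ γ * besselKIntegrand ν x t)
      ((volume.restrict (Ioi 0)).prod (volume.restrict (Ioi 0))) := by
  have hγν : -1 < γ + ν := by linarith
  refine integrable_prod_of_ae_nonneg (by unfold besselKIntegrand; fun_prop) ?_ ?_ ?_
  · filter_upwards [ae_restrict_mem measurableSet_Ioi] with t (ht : 0 < t)
    filter_upwards [ae_restrict_mem measurableSet_Ioi] with x (hx : 0 < x)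
    simp only [Function.uncurry_apply_pair, besselKIntegrand]
    positivity
  · filter_upwards [ae_restrict_mem measurableSet_Ioi] with t (ht : 0 < t)
    exact IntegrableOn.congr_fun
      ((integrableOn_rpow_mul_exp_neg_mul_sq (inv_pos.2 (by positivity)) hγν).const_mul _)
      (fun x hx => (rpow_mul_besselKIntegrand t hx).symm) measurableSet_Ioi
  · exact IntegrableOn.congr_fun
      ((GammaIntegral_convergent (s := (1 + γ - ν) / 2) (by linarith)).const_mul _)
      (fun t ht => (integral_rpow_mul_besselKIntegrand hγν ht).symm) measurableSet_Ioi

theorem integral_rpow_mul_besselK {γ ν : ℝ} (h1 : 0 < γ + 1 + ν) (h2 : 0 < γ + 1 - ν) :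
    ∫ x in Ioi 0, x ^ γ * besselK ν x =
      2 ^ (γ - 1) * Gamma ((1 + γ + ν) / 2) * Gamma ((1 + γ - ν) / 2) := by
  calc ∫ x in Ioi 0, x ^ γ * besselK ν x
      = ∫ x in Ioi 0, ∫ t in Ioi 0, x ^ γ * besselKIntegrand ν x t := by
        simp only [besselK_eq_integral, integral_const_mul]
    _ = ∫ t in Ioi 0, ∫ x in Ioi 0, x ^ γ * besselKIntegrand ν x t :=
        (integral_integral_swap (integrable_rpow_mul_besselKIntegrand h1 h2)).symm
    _ = ∫ t in Ioi 0, 2 ^ (γ - 1) * Gamma ((1 + γ + ν) / 2) *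
          (exp (-t) * t ^ ((1 + γ - ν) / 2 - 1)) :=
        setIntegral_congr_fun measurableSet_Ioi fun t ht =>
          integral_rpow_mul_besselKIntegrand (by linarith) ht
    _ = _ := by rw [integral_const_mul, ← Gamma_eq_integral (by linarith)]

/-- Integral property of the Bessel function:
`∫₀^∞ x^γ K_ν(a x) dx = 2^{γ-1}/a^{γ+1} · Γ((1+γ+ν)/2) · Γ((1+γ-ν)/2)`. -/
theorem besselK_integral (a γ ν : ℝ) (ha : 0 < a)
    (h1 : 0 < γ + 1 + ν) (h2 : 0 < γ + 1 - ν) :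
    ∫ x in Set.Ioi (0 : ℝ), x ^ γ * besselK ν (a * x)
      = 2 ^ (γ - 1) / a ^ (γ + 1) *
          Real.Gamma ((1 + γ + ν) / 2) * Real.Gamma ((1 + γ - ν) / 2) := by
  have hscale := integral_Ioi_rpow_smul_comp_mul_left (besselK ν) γ ha
  simp only [smul_eq_mul] at hscale
  rw [hscale, integral_rpow_mul_besselK h1 h2, rpow_neg ha.le]
  ring
end

section
/- For every τ ≥ 1, B(1/2, τ)² ≤ 4/τ, with equality when τ = 1; here B(x, y) = Γ(x)Γ(y)/Γ(x+y) is the beta function. Consequently, for α ∈ [0, 1) and τ = 1/(1−α), one has √(2/(1−α) − 4/B(1/2, τ)²) ≤ 2/B(1/2, τ), i.e., the standard deviation bound σ(t) in the Utility theorem is always at most the mean error bound μ(t), with equality at α = 0. -/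
open Real Filter Finset Topology

private lemma prod_sq_ge (τ : ℝ) (hτ : 1 ≤ τ) (m : ℕ) :
    τ * (m + 1) / (τ + m) ≤
      (∏ j ∈ Finset.range m,
        ((τ + j) * (3/2 + j)) / ((τ + 1/2 + j) * (1 + j))) ^ 2 := by
  have hτ0 : (0:ℝ) < τ := lt_of_lt_of_le one_pos hτ
  induction m with
  | zero =>
      simp only [Nat.cast_zero, Finset.range_zero, Finset.prod_empty, one_pow]
      rw [add_zero, zero_add, mul_one, div_self hτ0.ne']
  | succ m ih =>
      have hm0 : (0:ℝ) ≤ (m:ℝ) := Nat.cast_nonneg m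
      have hfm : ((m:ℝ) + 2) * (τ + m) / (((m:ℝ) + 1) * (τ + m + 1)) ≤
          (((τ + m) * (3/2 + m)) / ((τ + 1/2 + m) * (1 + m))) ^ 2 := by
        rw [div_pow, div_le_div_iff₀ (by positivity) (by positivity)]
        nlinarith [mul_nonneg (sub_nonneg.2 hτ) (by positivity : (0:ℝ) ≤ (τ + m) + (m + 1) + 1),
          mul_pos (by positivity : (0:ℝ) < τ + m) (by positivity : (0:ℝ) < (m:ℝ) + 1),
          sq_nonneg ((m:ℝ)+1), sq_nonneg (τ+m)]
      rw [Finset.prod_range_succ, mul_pow]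
      have heq : τ * ((m:ℝ) + 1 + 1) / (τ + ((m:ℝ) + 1)) =
          (τ * (m + 1) / (τ + m)) * (((m:ℝ) + 2) * (τ + m) / (((m:ℝ) + 1) * (τ + m + 1))) := by
        field_simp
        ring
      push_cast
      rw [heq]
      exact mul_le_mul ih hfm (by positivity) (sq_nonneg _)

private lemma gamma_core (τ : ℝ) (hτ : 1 ≤ τ) :
    π * τ * Real.Gamma τ ^ 2 ≤ 4 * Real.Gamma (τ + 1/2) ^ 2 := by
  have hτ0 : (0:ℝ) < τ := lt_of_lt_of_le one_pos hτ
  have hGτ : 0 < Real.Gamma τ := Real.Gamma_pos_of_pos hτ0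
  have hG32 : 0 < Real.Gamma (3/2) := Real.Gamma_pos_of_pos (by norm_num)
  have hGτ2 : 0 < Real.Gamma (τ + 1/2) := Real.Gamma_pos_of_pos (by linarith)
  have hlim : Tendsto
      (fun n => (Real.GammaSeq (τ+1/2) n * Real.GammaSeq 1 n /
        (Real.GammaSeq τ n * Real.GammaSeq (3/2) n)) ^ 2) atTop
      (𝓝 ((Real.Gamma (τ+1/2) * Real.Gamma 1 / (Real.Gamma τ * Real.Gamma (3/2))) ^ 2)) :=
    (((Real.GammaSeq_tendsto_Gamma (τ+1/2)).mul
      (Real.GammaSeq_tendsto_Gamma 1)).div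
      ((Real.GammaSeq_tendsto_Gamma τ).mul (Real.GammaSeq_tendsto_Gamma (3/2)))
      (ne_of_gt (mul_pos hGτ hG32))).pow 2
  have hblim : Tendsto (fun n : ℕ => τ * ((n:ℝ) + 2) / (τ + n + 1)) atTop (𝓝 τ) := by
    have hd : Tendsto (fun n : ℕ => τ + (n:ℝ) + 1) atTop atTop := by
      have h1 := tendsto_natCast_atTop_atTop (R := ℝ)
      have h2 := tendsto_atTop_add_const_right atTop (τ + 1) h1
      exact h2.congr fun n => by ring
    have h0 : Tendsto (fun n : ℕ => (τ - 1) / (τ + (n:ℝ) + 1)) atTop (𝓝 0) :=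
      hd.const_div_atTop (τ - 1)
    have heq : ∀ n : ℕ, τ - τ * ((τ - 1) / (τ + (n:ℝ) + 1)) = τ * ((n:ℝ) + 2) / (τ + n + 1) := by
      intro n
      have hpos : (0:ℝ) < τ + n + 1 := by positivity
      field_simp
      ring
    have h3 : Tendsto (fun n : ℕ => τ - τ * ((τ - 1) / (τ + (n:ℝ) + 1))) atTop (𝓝 (τ - τ * 0)) :=
      tendsto_const_nhds.sub (tendsto_const_nhds.mul h0)
    rw [mul_zero, sub_zero] at h3
    exact h3.congr heq
  have hev : ∀ᶠ n : ℕ in atTop,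
      τ * ((n:ℝ) + 2) / (τ + n + 1) ≤
      (Real.GammaSeq (τ+1/2) n * Real.GammaSeq 1 n /
        (Real.GammaSeq τ n * Real.GammaSeq (3/2) n)) ^ 2 := by
    filter_upwards [eventually_ge_atTop 1] with n hn
    have hn0 : (0:ℝ) < n := by exact_mod_cast hn
    have hfac : (0:ℝ) < (n.factorial : ℝ) := by exact_mod_cast n.factorial_pos
    have hA1 : (0:ℝ) < ∏ j ∈ Finset.range (n+1), (τ + 1/2 + (j:ℝ)) :=
      Finset.prod_pos fun j _ => by positivity
    have hA2 : (0:ℝ) < ∏ j ∈ Finset.range (n+1), ((1:ℝ) + (j:ℝ)) :=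
      Finset.prod_pos fun j _ => by positivity
    have hA3 : (0:ℝ) < ∏ j ∈ Finset.range (n+1), (τ + (j:ℝ)) :=
      Finset.prod_pos fun j _ => by positivity
    have hA4 : (0:ℝ) < ∏ j ∈ Finset.range (n+1), ((3:ℝ)/2 + (j:ℝ)) :=
      Finset.prod_pos fun j _ => by positivity
    have hp1 : (0:ℝ) < (n:ℝ) ^ (τ + 1/2) := Real.rpow_pos_of_pos hn0 _
    have hp2 : (0:ℝ) < (n:ℝ) ^ (1:ℝ) := Real.rpow_pos_of_pos hn0 _
    have hp3 : (0:ℝ) < (n:ℝ) ^ τ := Real.rpow_pos_of_pos hn0 _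
    have hp4 : (0:ℝ) < (n:ℝ) ^ ((3:ℝ)/2) := Real.rpow_pos_of_pos hn0 _
    have hr : (n:ℝ) ^ (τ + 1/2) * (n:ℝ) ^ (1:ℝ) = (n:ℝ) ^ τ * (n:ℝ) ^ ((3:ℝ)/2) := by
      rw [← Real.rpow_add hn0, ← Real.rpow_add hn0]
      congr 1
      ring
    have hkey : Real.GammaSeq (τ+1/2) n * Real.GammaSeq 1 n /
        (Real.GammaSeq τ n * Real.GammaSeq (3/2) n) =
        ∏ j ∈ Finset.range (n+1),
          ((τ + (j:ℝ)) * (3/2 + (j:ℝ))) / ((τ + 1/2 + (j:ℝ)) * (1 + (j:ℝ))) := by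
      rw [Finset.prod_div_distrib, Finset.prod_mul_distrib, Finset.prod_mul_distrib]
      simp only [Real.GammaSeq]
      rw [div_mul_div_comm, div_mul_div_comm, div_div_div_comm]
      rw [show (n:ℝ)^(τ+1/2) * (n.factorial:ℝ) * ((n:ℝ)^(1:ℝ) * (n.factorial:ℝ)) =
          (n:ℝ)^τ * (n.factorial:ℝ) * ((n:ℝ)^((3:ℝ)/2) * (n.factorial:ℝ)) from by
        linear_combination ((n.factorial:ℝ))^2 * hr]
      rw [div_self (by positivity), one_div_div]
    rw [hkey]
    have h := prod_sq_ge τ hτ (n+1)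
    push_cast at h
    calc τ * ((n:ℝ) + 2) / (τ + n + 1) = τ * ((n:ℝ) + 1 + 1) / (τ + ((n:ℝ) + 1)) := by ring
      _ ≤ _ := h
  have hτle : τ ≤ (Real.Gamma (τ+1/2) * Real.Gamma 1 / (Real.Gamma τ * Real.Gamma (3/2))) ^ 2 :=
    le_of_tendsto_of_tendsto hblim hlim hev
  have hG32eq : Real.Gamma (3/2 : ℝ) = Real.sqrt π / 2 := by
    rw [show (3/2:ℝ) = 1/2 + 1 by norm_num, Real.Gamma_add_one (by norm_num),
      Real.Gamma_one_half_eq]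
    ring
  rw [Real.Gamma_one, mul_one, hG32eq, div_pow, le_div_iff₀ (by positivity)] at hτle
  have e1 : (Real.Gamma τ * (Real.sqrt π / 2)) ^ 2 = π * Real.Gamma τ ^ 2 / 4 := by
    rw [mul_pow, div_pow, sq_sqrt pi_pos.le]
    ring
  rw [e1] at hτle
  linarith

/-- For every `τ ≥ 1`, `B(1/2, τ)² ≤ 4/τ` with equality at `τ = 1`; consequently, with
`τ = 1/(1-α)` for `α ∈ [0,1)`, `√(2/(1-α) - 4/B(1/2,τ)²) ≤ 2/B(1/2,τ)`, i.e. the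
standard deviation bound is at most the mean error bound in the Utility theorem. -/
theorem beta_sq_le_and_sigma_le_mu :
    (∀ τ : ℝ, 1 ≤ τ →
        (Real.Gamma (1 / 2) * Real.Gamma τ / Real.Gamma (1 / 2 + τ)) ^ 2 ≤ 4 / τ) ∧
    (Real.Gamma (1 / 2) * Real.Gamma 1 / Real.Gamma (1 / 2 + 1)) ^ 2 = 4 / 1 ∧
    ∀ α : ℝ, 0 ≤ α → α < 1 →
      Real.sqrt (2 / (1 - α) -
          4 / (Real.Gamma (1 / 2) * Real.Gamma (1 / (1 - α)) /
                Real.Gamma (1 / 2 + 1 / (1 - α))) ^ 2)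
        ≤ 2 / (Real.Gamma (1 / 2) * Real.Gamma (1 / (1 - α)) /
              Real.Gamma (1 / 2 + 1 / (1 - α))) := by
  have part1 : ∀ τ : ℝ, 1 ≤ τ →
      (Real.Gamma (1 / 2) * Real.Gamma τ / Real.Gamma (1 / 2 + τ)) ^ 2 ≤ 4 / τ := by
    intro τ hτ
    have hτ0 : (0:ℝ) < τ := lt_of_lt_of_le one_pos hτ
    have h := gamma_core τ hτ
    have hG : 0 < Real.Gamma (1/2 + τ) := Real.Gamma_pos_of_pos (by linarith)
    have hGτ : 0 < Real.Gamma τ := Real.Gamma_pos_of_pos hτ0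
    rw [Real.Gamma_one_half_eq, div_pow, div_le_div_iff₀ (by positivity) hτ0]
    rw [add_comm (1/2:ℝ) τ]
    have e1 : (Real.sqrt π * Real.Gamma τ) ^ 2 * τ = π * τ * Real.Gamma τ ^ 2 := by
      rw [mul_pow, sq_sqrt pi_pos.le]
      ring
    rw [e1]
    linarith
  refine ⟨part1, ?_, ?_⟩
  · rw [Real.Gamma_add_one (by norm_num : (1/2:ℝ) ≠ 0), Real.Gamma_one, Real.Gamma_one_half_eq]
    have h : Real.sqrt π ≠ 0 := ne_of_gt (Real.sqrt_pos.2 pi_pos)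
    field_simp
    ring
  · intro α hα0 hα1
    have h1α : (0:ℝ) < 1 - α := by linarith
    set τ : ℝ := 1 / (1 - α) with hτdef
    have hτ1 : 1 ≤ τ := by
      rw [hτdef, le_div_iff₀ h1α, one_mul]
      linarith
    have hτ0 : (0:ℝ) < τ := lt_of_lt_of_le one_pos hτ1
    set B : ℝ := Real.Gamma (1 / 2) * Real.Gamma τ / Real.Gamma (1 / 2 + τ) with hBdef
    have hG1 : 0 < Real.Gamma (1/2 : ℝ) := Real.Gamma_pos_of_pos (by norm_num)
    have hGτ : 0 < Real.Gamma τ := Real.Gamma_pos_of_pos hτ0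
    have hG2 : 0 < Real.Gamma (1/2 + τ) := Real.Gamma_pos_of_pos (by linarith)
    have hB : 0 < B := by
      rw [hBdef]
      positivity
    have hB2 : B ^ 2 ≤ 4 / τ := part1 τ hτ1
    have hτle : τ ≤ 4 / B ^ 2 := by
      rw [le_div_iff₀ (by positivity)]
      have := (le_div_iff₀ hτ0).1 hB2
      linarith [this]
    have h2τ : 2 / (1 - α) = 2 * τ := by
      rw [hτdef]
      ring
    have harg : 2 / (1 - α) - 4 / B ^ 2 ≤ (2 / B) ^ 2 := by
      have e : (2 / B) ^ 2 = 4 / B ^ 2 := by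
        rw [div_pow]
        norm_num
      rw [h2τ, e]
      linarith
    calc Real.sqrt (2 / (1 - α) - 4 / B ^ 2) ≤ Real.sqrt ((2 / B) ^ 2) :=
          Real.sqrt_le_sqrt harg
      _ = 2 / B := Real.sqrt_sq (by positivity)
end
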